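/- arXiv:1711.02323 — 6 statements merged into one kernel-verified Lean document; each statement's English description precedes it below -/
import Mathlib

section
/- If {H'_ν} is obtained from an orthonormal observable basis {H_μ} by a real orthogonal matrix (H'_ν = Σ_μ c_{νμ} H_μ with Σ_ν c_{νμ}c_{νr} = δ_{μr}), then for any density matrix ρ, Σ_ν F(ρ, H'_ν) = Σ_μ F(ρ, H_μ). -/
open Matrix BigOperators Kronecker

/-- |v⟩⟨v| as a matrix. -/
noncomputable def ketbra {d : Type*} [Fintype d] (v : d → ℂ) : Matrix d d ℂ :=
  Matrix.vecMulVec v (star v)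

/-- An orthonormal family of vectors. -/
def OrthonormalFam {ι d : Type*} [DecidableEq ι] [Fintype d] (ψ : ι → d → ℂ) : Prop :=
  ∀ i j, star (ψ i) ⬝ᵥ ψ j = if i = j then (1 : ℂ) else 0

/-- Quantum Fisher information computed from a spectral decomposition (p, ψ):
    F = Σ_{i,j : pᵢ+pⱼ>0} (pᵢ-pⱼ)²/(2(pᵢ+pⱼ)) |⟨ψᵢ|H|ψⱼ⟩|². -/
noncomputable def qfi {ι d : Type*} [Fintype ι] [Fintype d]
    (p : ι → ℝ) (ψ : ι → d → ℂ) (H : Matrix d d ℂ) : ℝ :=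
  ∑ i, ∑ j,
    if 0 < p i + p j then
      (p i - p j) ^ 2 / (2 * (p i + p j)) * Complex.normSq (star (ψ i) ⬝ᵥ H *ᵥ ψ j)
    else 0

/-- (p, ψ) is a (full) spectral decomposition of the density matrix ρ. -/
def IsSpectralDecomp {d : Type*} [Fintype d] [DecidableEq d]
    (ρ : Matrix d d ℂ) (p : d → ℝ) (ψ : d → d → ℂ) : Prop :=
  (∀ i, 0 ≤ p i) ∧ (∑ i, p i = 1) ∧ OrthonormalFam ψ ∧ ρ = ∑ i, p i • ketbra (ψ i)

lemma rot_sum_sq {m : ℕ} (c : Fin m → Fin m → ℝ)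
    (hc : ∀ μ r, ∑ ν, c ν μ * c ν r = if μ = r then (1 : ℝ) else 0)
    (a : Fin m → ℝ) : ∑ ν, (∑ μ, c ν μ * a μ) ^ 2 = ∑ μ, a μ ^ 2 := by
  have h1 : ∀ ν : Fin m, (∑ μ, c ν μ * a μ) ^ 2
      = ∑ μ, ∑ r, (c ν μ * c ν r) * (a μ * a r) := by
    intro ν
    rw [sq, Finset.sum_mul_sum]
    exact Finset.sum_congr rfl fun μ _ => Finset.sum_congr rfl fun r _ => by ring
  simp_rw [h1]
  rw [Finset.sum_comm]
  have h2 : ∀ μ : Fin m, ∑ ν, ∑ r, (c ν μ * c ν r) * (a μ * a r)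
      = ∑ r, (∑ ν, c ν μ * c ν r) * (a μ * a r) := by
    intro μ
    rw [Finset.sum_comm]
    exact Finset.sum_congr rfl fun r _ => (Finset.sum_mul _ _ _).symm
  simp_rw [h2, hc, ite_mul, one_mul, zero_mul, Finset.sum_ite_eq,
    Finset.mem_univ, if_pos, sq]

lemma rot_sum_normSq {m : ℕ} (c : Fin m → Fin m → ℝ)
    (hc : ∀ μ r, ∑ ν, c ν μ * c ν r = if μ = r then (1 : ℝ) else 0)
    (z : Fin m → ℂ) :
    ∑ ν, Complex.normSq (∑ μ, (c ν μ : ℂ) * z μ) = ∑ μ, Complex.normSq (z μ) := by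
  have hre : ∀ ν, (∑ μ, (c ν μ : ℂ) * z μ).re = ∑ μ, c ν μ * (z μ).re := by
    intro ν; rw [Complex.re_sum]; simp [Complex.mul_re]
  have him : ∀ ν, (∑ μ, (c ν μ : ℂ) * z μ).im = ∑ μ, c ν μ * (z μ).im := by
    intro ν; rw [Complex.im_sum]; simp [Complex.mul_im]
  simp_rw [Complex.normSq_apply, ← sq, hre, him]
  rw [Finset.sum_add_distrib, rot_sum_sq c hc (fun μ => (z μ).re),
    rot_sum_sq c hc (fun μ => (z μ).im), ← Finset.sum_add_distrib]

/-- If H'ν = Σ_μ c_{νμ} H_μ with c a real orthogonal matrix, then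
    Σ_ν F(ρ,H'_ν) = Σ_μ F(ρ,H_μ). -/
theorem stmt4 {n : ℕ} (ρ : Matrix (Fin n) (Fin n) ℂ)
    (p : Fin n → ℝ) (ψ : Fin n → Fin n → ℂ) (hdec : IsSpectralDecomp ρ p ψ)
    (H H' : Fin (n ^ 2) → Matrix (Fin n) (Fin n) ℂ)
    (hHherm : ∀ μ, (H μ).IsHermitian)
    (hHortho : ∀ μ ν, (H μ * H ν).trace = if μ = ν then (1 : ℂ) else 0)
    (c : Fin (n ^ 2) → Fin (n ^ 2) → ℝ)
    (hc : ∀ μ r, ∑ ν, c ν μ * c ν r = if μ = r then (1 : ℝ) else 0)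
    (hH' : ∀ ν, H' ν = ∑ μ, c ν μ • H μ) :
    ∑ ν, qfi p ψ (H' ν) = ∑ μ, qfi p ψ (H μ) := by
  unfold qfi
  have swap : ∀ (g : Fin (n ^ 2) → Fin n → Fin n → ℝ),
      ∑ ν, ∑ i, ∑ j, g ν i j = ∑ i, ∑ j, ∑ ν, g ν i j := by
    intro g
    rw [Finset.sum_comm]
    exact Finset.sum_congr rfl fun i _ => Finset.sum_comm
  rw [swap, swap]
  apply Finset.sum_congr rfl; intro i _
  apply Finset.sum_congr rfl; intro j _
  by_cases h : 0 < p i + p j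
  · simp only [if_pos h]
    rw [← Finset.mul_sum, ← Finset.mul_sum]
    congr 1
    have key : ∀ ν, star (ψ i) ⬝ᵥ (H' ν) *ᵥ ψ j
        = ∑ μ, (c ν μ : ℂ) * (star (ψ i) ⬝ᵥ (H μ) *ᵥ ψ j) := by
      intro ν
      let L : Matrix (Fin n) (Fin n) ℂ →ₗ[ℂ] ℂ :=
        { toFun := fun A => star (ψ i) ⬝ᵥ A *ᵥ ψ j
          map_add' := fun A B => by
            rw [Matrix.add_mulVec, dotProduct_add]
          map_smul' := fun r A => by
            rw [Matrix.smul_mulVec, dotProduct_smul]; rfl }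
      have hcast : ∀ μ, c ν μ • H μ = (c ν μ : ℂ) • H μ := by
        intro μ; ext k l; simp [Complex.real_smul]
      rw [hH' ν]
      show L (∑ μ, c ν μ • H μ) = _
      simp_rw [hcast]
      rw [map_sum]
      exact Finset.sum_congr rfl fun μ _ => by rw [_root_.map_smul, smul_eq_mul]; rfl
    simp_rw [key]
    exact rot_sum_normSq c hc _
  · simp [h]
end

section
/- Quantum Fisher information is convex: F(Σₙ λₙ ρₙ, H) ≤ Σₙ λₙ F(ρₙ, H) for probability weights λₙ ≥ 0 summing to 1 and density matrices ρₙ. -/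
open Matrix BigOperators Kronecker

/-!
For any matrix `A`, the functional
  `G(A, ρ) = Im tr(Aᴴ [H, ρ]) - ½ Re tr((Aᴴ A + A Aᴴ) ρ)`
is linear in `ρ` and bounded by `F(ρ, H)`: in an eigenbasis of `ρ` it splits into the entries
`(pⱼ - pᵢ) Im(conj aᵢⱼ hᵢⱼ) - ½ (pᵢ + pⱼ) |aᵢⱼ|²`, each at most
`(pᵢ - pⱼ)² / (2 (pᵢ + pⱼ)) |hᵢⱼ|²` by `|Im(conj a h)| ≤ |a| |h|` and AM-GM.
Equality holds for `aᵢⱼ = i (pᵢ - pⱼ) / (pᵢ + pⱼ) hᵢⱼ`. So `F(·, H)` is a pointwise supremum of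
linear functionals; taking `A` optimal for the mixture `∑ λₖ ρₖ` gives
`F(∑ λₖ ρₖ) = G(A, ∑ λₖ ρₖ) = ∑ λₖ G(A, ρₖ) ≤ ∑ λₖ F(ρₖ)`.
-/

open Complex

noncomputable def qfiTerm (a b : ℝ) (z w : ℂ) : ℝ :=
  (star z * w).im * (b - a) - normSq z * (a + b) / 2

lemma qfiTerm_le {a b : ℝ} (ha : 0 ≤ a) (hb : 0 ≤ b) (z w : ℂ) :
    qfiTerm a b z w ≤
      if 0 < a + b then (a - b) ^ 2 / (2 * (a + b)) * normSq w else 0 := by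
  have him : |(star z * w).im| ≤ ‖z‖ * ‖w‖ := by
    simpa using abs_im_le_norm (star z * w)
  rw [qfiTerm, normSq_eq_norm_sq, normSq_eq_norm_sq]
  split_ifs with hab
  · rw [div_mul_eq_mul_div, le_div_iff₀ (by positivity)]
    have hle : (star z * w).im * (b - a) ≤ ‖z‖ * ‖w‖ * |b - a| :=
      (le_abs_self _).trans (by rw [abs_mul]; gcongr)
    nlinarith [sq_nonneg (‖z‖ * (a + b) - ‖w‖ * |b - a|), sq_abs (b - a)]
  · obtain rfl : a = 0 := by linarith
    obtain rfl : b = 0 := by linarith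
    simp

/-- At `a + b = 0` the junk value `(a - b) / 0 = 0` makes `z = 0`, matching the zero summand. -/
lemma qfiTerm_optimal {a b : ℝ} (hab : 0 ≤ a + b) (w : ℂ) :
    qfiTerm a b (I * ((a - b) / (a + b) : ℝ) * w) w =
      if 0 < a + b then (a - b) ^ 2 / (2 * (a + b)) * normSq w else 0 := by
  split_ifs with hpos
  · simp only [qfiTerm, star_mul', star_def, conj_I, conj_ofReal,
      mul_im, mul_re, neg_re, neg_im, I_re, I_im, ofReal_re, ofReal_im,
      conj_re, conj_im, normSq_apply]
    field_simp
    ring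
  · rw [le_antisymm (not_lt.mp hpos) hab]
    simp [qfiTerm]

section Eigenbasis

variable {d : Type*} [Fintype d]

def basisMatrix (ψ : d → d → ℂ) : Matrix d d ℂ :=
  Matrix.of fun i j => ψ j i

lemma conjTranspose_basisMatrix_mul_mul_apply (ψ : d → d → ℂ) (M : Matrix d d ℂ) (i j : d) :
    ((basisMatrix ψ)ᴴ * M * basisMatrix ψ) i j = star (ψ i) ⬝ᵥ M *ᵥ ψ j := by
  simp only [mul_apply, basisMatrix, conjTranspose_apply, of_apply, dotProduct, mulVec,
    Pi.star_apply, Finset.sum_mul, Finset.mul_sum, mul_assoc]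
  exact Finset.sum_comm

variable [DecidableEq d]

lemma conjTranspose_basisMatrix_mul_self {ψ : d → d → ℂ} (hψ : OrthonormalFam ψ) :
    (basisMatrix ψ)ᴴ * basisMatrix ψ = 1 := by
  ext i j
  simpa [mul_apply, basisMatrix, dotProduct, one_apply] using hψ i j

lemma basisMatrix_mul_conjTranspose_self {ψ : d → d → ℂ} (hψ : OrthonormalFam ψ) :
    basisMatrix ψ * (basisMatrix ψ)ᴴ = 1 :=
  mul_eq_one_comm.mp (conjTranspose_basisMatrix_mul_self hψ)

lemma sum_smul_ketbra_eq (p : d → ℝ) (ψ : d → d → ℂ) :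
    ∑ i, p i • ketbra (ψ i) =
      basisMatrix ψ * diagonal (fun i => (p i : ℂ)) * (basisMatrix ψ)ᴴ := by
  ext a b
  rw [mul_apply]
  simp only [mul_diagonal, Matrix.sum_apply, Matrix.smul_apply, ketbra, vecMulVec_apply,
    basisMatrix, of_apply, conjTranspose_apply, Pi.star_apply, Complex.real_smul]
  exact Finset.sum_congr rfl fun i _ => by ring

lemma trace_mul_mul_eq_sum {ρ : Matrix d d ℂ} {p : d → ℝ} {ψ : d → d → ℂ}
    (hψ : OrthonormalFam ψ) (hρ : ρ = ∑ i, p i • ketbra (ψ i)) (X Y : Matrix d d ℂ) :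
    trace (X * Y * ρ) = ∑ i, ∑ j, (p i : ℂ) * (((basisMatrix ψ)ᴴ * X * basisMatrix ψ) i j *
      ((basisMatrix ψ)ᴴ * Y * basisMatrix ψ) j i) := by
  set V := basisMatrix ψ
  have hXY : Vᴴ * (X * Y) * V = (Vᴴ * X * V) * (Vᴴ * Y * V) := by
    simp only [Matrix.mul_assoc]
    rw [← Matrix.mul_assoc V, basisMatrix_mul_conjTranspose_self hψ, Matrix.one_mul]
  rw [hρ, sum_smul_ketbra_eq, ← Matrix.mul_assoc, trace_mul_comm, ← Matrix.mul_assoc,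
    ← Matrix.mul_assoc, hXY]
  generalize Vᴴ * X * V = X' at *
  generalize Vᴴ * Y * V = Y' at *
  simp only [trace, diag, mul_diagonal]
  simp only [mul_apply, Finset.sum_mul]
  exact Finset.sum_congr rfl fun i _ => Finset.sum_congr rfl fun j _ => by ring

noncomputable def qfiFunctional (H A ρ : Matrix d d ℂ) : ℝ :=
  (trace (Aᴴ * H * ρ) - trace (H * Aᴴ * ρ)).im - (trace (Aᴴ * A * ρ) + trace (A * Aᴴ * ρ)).re / 2

lemma qfiFunctional_eq_sum (H A : Matrix d d ℂ) {ρ : Matrix d d ℂ} {p : d → ℝ}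
    {ψ : d → d → ℂ} (hψ : OrthonormalFam ψ) (hρ : ρ = ∑ i, p i • ketbra (ψ i)) :
    qfiFunctional H A ρ =
      ∑ i, ∑ j, qfiTerm (p i) (p j) (star (ψ i) ⬝ᵥ A *ᵥ ψ j) (star (ψ i) ⬝ᵥ H *ᵥ ψ j) := by
  have hAdj :
      (basisMatrix ψ)ᴴ * Aᴴ * basisMatrix ψ = ((basisMatrix ψ)ᴴ * A * basisMatrix ψ)ᴴ := by
    simp only [conjTranspose_mul, conjTranspose_conjTranspose, Matrix.mul_assoc]
  simp only [qfiFunctional, trace_mul_mul_eq_sum hψ hρ, hAdj, conjTranspose_apply,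
    ← conjTranspose_basisMatrix_mul_mul_apply]
  generalize (basisMatrix ψ)ᴴ * A * basisMatrix ψ = A'
  generalize (basisMatrix ψ)ᴴ * H * basisMatrix ψ = H'
  rw [Finset.sum_comm (f := fun i j => (p i : ℂ) * (star (A' j i) * H' j i)),
    Finset.sum_comm (f := fun i j => (p i : ℂ) * (star (A' j i) * A' j i))]
  simp only [Complex.sub_im, Complex.add_re, Complex.im_sum, Complex.re_sum, Finset.sum_div,
    ← Finset.sum_sub_distrib, ← Finset.sum_add_distrib]
  refine Finset.sum_congr rfl fun i _ => Finset.sum_congr rfl fun j _ => ?_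
  simp only [qfiTerm, mul_im, mul_re, ofReal_re, ofReal_im, normSq_apply, star_def, conj_re,
    conj_im]
  ring

lemma qfiFunctional_sum_smul {ι : Type*} [Fintype ι] (H A : Matrix d d ℂ) (lam : ι → ℝ)
    (ρ : ι → Matrix d d ℂ) :
    qfiFunctional H A (∑ k, lam k • ρ k) = ∑ k, lam k * qfiFunctional H A (ρ k) := by
  have htrace : ∀ X : Matrix d d ℂ,
      trace (X * ∑ k, lam k • ρ k) = ∑ k, lam k • trace (X * ρ k) := by
    intro X
    simp only [Finset.mul_sum, mul_smul_comm, trace_sum, trace_smul]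
  simp only [qfiFunctional, htrace, ← Finset.sum_sub_distrib, ← Finset.sum_add_distrib,
    ← smul_sub, ← smul_add, im_sum, re_sum, smul_re, smul_im, Finset.sum_div, smul_eq_mul]
  exact Finset.sum_congr rfl fun k _ => by ring

lemma qfiFunctional_le_qfi (H A : Matrix d d ℂ) {ρ : Matrix d d ℂ} {p : d → ℝ}
    {ψ : d → d → ℂ} (hψ : OrthonormalFam ψ) (hρ : ρ = ∑ i, p i • ketbra (ψ i))
    (hp : ∀ i, 0 ≤ p i) :
    qfiFunctional H A ρ ≤ qfi p ψ H := by
  rw [qfiFunctional_eq_sum H A hψ hρ, qfi]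
  exact Finset.sum_le_sum fun i _ => Finset.sum_le_sum fun j _ => qfiTerm_le (hp i) (hp j) _ _

lemma exists_qfiFunctional_eq_qfi (H : Matrix d d ℂ) {ρ : Matrix d d ℂ} {p : d → ℝ}
    {ψ : d → d → ℂ} (hψ : OrthonormalFam ψ) (hρ : ρ = ∑ i, p i • ketbra (ψ i))
    (hp : ∀ i, 0 ≤ p i) :
    ∃ A, qfiFunctional H A ρ = qfi p ψ H := by
  set B : Matrix d d ℂ :=
    of fun i j => I * ((p i - p j) / (p i + p j) : ℝ) * (star (ψ i) ⬝ᵥ H *ᵥ ψ j)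
  have hV := conjTranspose_basisMatrix_mul_self hψ
  have hB : ∀ i j, star (ψ i) ⬝ᵥ (basisMatrix ψ * B * (basisMatrix ψ)ᴴ) *ᵥ ψ j = B i j := by
    intro i j
    rw [← conjTranspose_basisMatrix_mul_mul_apply, ← Matrix.mul_assoc, ← Matrix.mul_assoc, hV,
      Matrix.one_mul, Matrix.mul_assoc, hV, Matrix.mul_one]
  refine ⟨basisMatrix ψ * B * (basisMatrix ψ)ᴴ, ?_⟩
  rw [qfiFunctional_eq_sum H _ hψ hρ, qfi]
  refine Finset.sum_congr rfl fun i _ => Finset.sum_congr rfl fun j _ => ?_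
  rw [hB]
  exact qfiTerm_optimal (add_nonneg (hp i) (hp j)) _

end Eigenbasis

theorem stmt5_general {n K : ℕ} (H : Matrix (Fin n) (Fin n) ℂ)
    (lam : Fin K → ℝ) (hlam : ∀ k, 0 ≤ lam k)
    (ρ : Fin K → Matrix (Fin n) (Fin n) ℂ)
    (p : Fin K → Fin n → ℝ) (ψ : Fin K → Fin n → Fin n → ℂ)
    (hdec : ∀ k, IsSpectralDecomp (ρ k) (p k) (ψ k))
    (q : Fin n → ℝ) (φ : Fin n → Fin n → ℂ)
    (hmix : IsSpectralDecomp (∑ k, lam k • ρ k) q φ) :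
    qfi q φ H ≤ ∑ k, lam k * qfi (p k) (ψ k) H := by
  obtain ⟨hq, -, hφ, hmix⟩ := hmix
  obtain ⟨A, hA⟩ := exists_qfiFunctional_eq_qfi H hφ hmix hq
  calc qfi q φ H = qfiFunctional H A (∑ k, lam k • ρ k) := hA.symm
    _ = ∑ k, lam k * qfiFunctional H A (ρ k) := qfiFunctional_sum_smul H A lam ρ
    _ ≤ ∑ k, lam k * qfi (p k) (ψ k) H := by
      refine Finset.sum_le_sum fun k _ => mul_le_mul_of_nonneg_left ?_ (hlam k)
      obtain ⟨hp, -, hψ, hρ⟩ := hdec k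
      exact qfiFunctional_le_qfi H A hψ hρ hp

/-- Convexity of QFI: F(Σₙ λₙ ρₙ, H) ≤ Σₙ λₙ F(ρₙ, H). -/
theorem stmt5 {n K : ℕ} (H : Matrix (Fin n) (Fin n) ℂ) (hH : H.IsHermitian)
    (lam : Fin K → ℝ) (hlam : ∀ k, 0 ≤ lam k) (hlamsum : ∑ k, lam k = 1)
    (ρ : Fin K → Matrix (Fin n) (Fin n) ℂ)
    (p : Fin K → Fin n → ℝ) (ψ : Fin K → Fin n → Fin n → ℂ)
    (hdec : ∀ k, IsSpectralDecomp (ρ k) (p k) (ψ k))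
    (q : Fin n → ℝ) (φ : Fin n → Fin n → ℂ)
    (hmix : IsSpectralDecomp (∑ k, lam k • ρ k) q φ) :
    qfi q φ H ≤ ∑ k, lam k * qfi (p k) (ψ k) H :=
  stmt5_general H lam hlam ρ p ψ hdec q φ hmix
end

section
/- If ρ^{ab} is a classical-quantum state ρ^{ab} = Σᵢ pᵢ |αᵢ⟩⟨αᵢ| ⊗ ρ^{b|i} with {|αᵢ⟩} orthonormal, then for any Hermitian operator H_b on the second factor and H_B = 1⊗H_b, the quantum Fisher information decomposes as F(ρ^{ab}, H_B) = Σᵢ pᵢ F(ρ^{b|i}, H_b). -/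
open Matrix BigOperators Kronecker

/-!
The product vectors `αᵢ ⊗ β_{i,k}` have weights `pᵢ q_{i,k}`. By orthonormality of the `αᵢ`,
`⟨αᵢ ⊗ β_{i,k}| 1 ⊗ H_b |αⱼ ⊗ β_{j,l}⟩ = δᵢⱼ ⟨β_{i,k}| H_b |β_{j,l}⟩`, so the double sum defining
`F` is block diagonal in the classical index. Within block `i` the weight
`(pᵢx - pᵢy)² / (2(pᵢx + pᵢy))` is `pᵢ` times the weight for `(x, y)`, and blocks with `pᵢ = 0`
contribute nothing on either side.
-/

lemma star_dotProduct_kronecker_mulVec {a b : Type*} [Fintype a] [Fintype b]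
    (u u' : a → ℂ) (v v' : b → ℂ) (A : Matrix a a ℂ) (B : Matrix b b ℂ) :
    star (fun x : a × b => u x.1 * v x.2) ⬝ᵥ (A ⊗ₖ B) *ᵥ (fun x => u' x.1 * v' x.2)
      = (star u ⬝ᵥ A *ᵥ u') * (star v ⬝ᵥ B *ᵥ v') := by
  simp only [dotProduct, mulVec, kroneckerMap_apply, Fintype.sum_prod_type, Pi.star_apply,
    star_mul', Finset.sum_mul_sum]
  refine Finset.sum_congr rfl fun i _ => Finset.sum_congr rfl fun k _ => ?_
  rw [mul_mul_mul_comm, Finset.sum_mul_sum]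
  congr 1
  refine Finset.sum_congr rfl fun j _ => Finset.sum_congr rfl fun l _ => ?_
  ring

lemma qfi_const_mul {ι d : Type*} [Fintype ι] [Fintype d] {c : ℝ} (hc : 0 ≤ c)
    (p : ι → ℝ) (ψ : ι → d → ℂ) (H : Matrix d d ℂ) :
    qfi (fun i => c * p i) ψ H = c * qfi p ψ H := by
  simp only [qfi, Finset.mul_sum]
  refine Finset.sum_congr rfl fun i _ => Finset.sum_congr rfl fun j _ => ?_
  rcases hc.eq_or_lt with rfl | hc
  · simp
  simp_rw [← mul_add, mul_pos_iff_of_pos_left hc]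
  split_ifs with h
  · field_simp
  · rw [mul_zero]

lemma qfi_prod_of_offDiag_eq_zero {ι κ d : Type*} [Fintype ι] [Fintype κ] [Fintype d]
    (p : ι × κ → ℝ) (ψ : ι × κ → d → ℂ) (H : Matrix d d ℂ)
    (hψ : ∀ x y, x.1 ≠ y.1 → star (ψ x) ⬝ᵥ H *ᵥ ψ y = 0) :
    qfi p ψ H = ∑ i, qfi (fun k => p (i, k)) (fun k => ψ (i, k)) H := by
  simp only [qfi, Fintype.sum_prod_type]
  refine Finset.sum_congr rfl fun i _ => Finset.sum_congr rfl fun k _ => ?_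
  refine Fintype.sum_eq_single i fun j hj => Finset.sum_eq_zero fun l _ => ?_
  simp [hψ (i, k) (j, l) (Ne.symm hj)]

lemma qfi_congr_normSq {ι d d' : Type*} [Fintype ι] [Fintype d] [Fintype d']
    (p : ι → ℝ) {ψ : ι → d → ℂ} {φ : ι → d' → ℂ} {H : Matrix d d ℂ} {K : Matrix d' d' ℂ}
    (h : ∀ i j, Complex.normSq (star (ψ i) ⬝ᵥ H *ᵥ ψ j) = Complex.normSq (star (φ i) ⬝ᵥ K *ᵥ φ j)) :
    qfi p ψ H = qfi p φ K := by
  simp only [qfi, h]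

theorem stmt7_general {da db m : ℕ}
    (p : Fin m → ℝ) (hp : ∀ i, 0 ≤ p i)
    (α : Fin m → Fin da → ℂ) (hα : OrthonormalFam α)
    (q : Fin m → Fin db → ℝ) (β : Fin m → Fin db → Fin db → ℂ)
    (Hb : Matrix (Fin db) (Fin db) ℂ) :
    qfi (fun x : Fin m × Fin db => p x.1 * q x.1 x.2)
        (fun x : Fin m × Fin db => fun kl : Fin da × Fin db => α x.1 kl.1 * β x.1 x.2 kl.2)
        ((1 : Matrix (Fin da) (Fin da) ℂ) ⊗ₖ Hb)
      = ∑ i, p i * qfi (q i) (β i) Hb := by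
  have hmat : ∀ (i j : Fin m) (k l : Fin db),
      star (fun kl : Fin da × Fin db => α i kl.1 * β i k kl.2) ⬝ᵥ
        ((1 : Matrix (Fin da) (Fin da) ℂ) ⊗ₖ Hb) *ᵥ (fun kl => α j kl.1 * β j l kl.2)
      = (if i = j then 1 else 0) * (star (β i k) ⬝ᵥ Hb *ᵥ β j l) := fun i j k l => by
    rw [star_dotProduct_kronecker_mulVec, one_mulVec, hα]
  rw [qfi_prod_of_offDiag_eq_zero _ _ _ fun x y hxy => by simp [hmat, hxy]]
  refine Finset.sum_congr rfl fun i _ => ?_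
  rw [← qfi_const_mul (hp i)]
  exact qfi_congr_normSq _ fun k l => by rw [hmat, if_pos rfl, one_mul]

/-- For a classical-quantum state ρ = Σᵢ pᵢ |αᵢ⟩⟨αᵢ| ⊗ ρ^{b|i} and H_B = 1 ⊗ H_b,
    F(ρ, H_B) = Σᵢ pᵢ F(ρ^{b|i}, H_b). -/
theorem stmt7 {da db m : ℕ}
    (p : Fin m → ℝ) (hp : ∀ i, 0 ≤ p i) (hpsum : ∑ i, p i = 1)
    (α : Fin m → Fin da → ℂ) (hα : OrthonormalFam α)
    (ρb : Fin m → Matrix (Fin db) (Fin db) ℂ)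
    (q : Fin m → Fin db → ℝ) (β : Fin m → Fin db → Fin db → ℂ)
    (hdec : ∀ i, IsSpectralDecomp (ρb i) (q i) (β i))
    (ρab : Matrix (Fin da × Fin db) (Fin da × Fin db) ℂ)
    (hρab : ρab = ∑ i, p i • (ketbra (α i) ⊗ₖ ρb i))
    (Hb : Matrix (Fin db) (Fin db) ℂ) (hHb : Hb.IsHermitian) :
    qfi (fun x : Fin m × Fin db => p x.1 * q x.1 x.2)
        (fun x : Fin m × Fin db => fun kl : Fin da × Fin db => α x.1 kl.1 * β x.1 x.2 kl.2)
        ((1 : Matrix (Fin da) (Fin da) ℂ) ⊗ₖ Hb)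
      = ∑ i, p i * qfi (q i) (β i) Hb :=
  stmt7_general p hp α hα q β Hb
end

section
/- For any pure bipartite state with Schmidt coefficients sᵢ, a local observable H_b on H^b, and any orthonormal basis {|n⟩} of H^a with p(n) = Σᵢ sᵢ|⟨αᵢ|n⟩|² > 0, the inequality (Σᵢ sᵢ⟨βᵢ|H_b|βᵢ⟩)² ≤ Σₙ (Σ_{i,j} √(sᵢsⱼ)⟨αⱼ|n⟩⟨n|αᵢ⟩⟨βⱼ|H_b|βᵢ⟩)² / p(n) holds. -/
open Matrix BigOperators Kronecker

/-- Completeness of an orthonormal family of `da` vectors in dimension `da`. -/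
lemma completeAux {da : ℕ} (nv : Fin da → Fin da → ℂ) (hnv : OrthonormalFam nv) (k l : Fin da) :
    ∑ n, nv n k * (starRingEnd ℂ) (nv n l) = if k = l then 1 else 0 := by
  let M : Matrix (Fin da) (Fin da) ℂ := Matrix.of nv
  have h1 : M.map (starRingEnd ℂ) * Mᵀ = 1 := by
    ext i j
    simpa [Matrix.mul_apply, Matrix.one_apply, dotProduct, M, Pi.star_apply] using hnv i j
  have h2 : Mᵀ * M.map (starRingEnd ℂ) = 1 := mul_eq_one_comm.mp h1
  have h3 : (Mᵀ * M.map (starRingEnd ℂ)) k l = (1 : Matrix (Fin da) (Fin da) ℂ) k l := by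
    rw [h2]
  simpa [Matrix.mul_apply, Matrix.one_apply, M] using h3

/-- Resolution of the identity. -/
lemma resolveAux {da L : ℕ} (nv : Fin da → Fin da → ℂ) (hnv : OrthonormalFam nv)
    (α : Fin L → Fin da → ℂ) (i j : Fin L) :
    ∑ n, (star (α j) ⬝ᵥ nv n) * (star (nv n) ⬝ᵥ α i) = star (α j) ⬝ᵥ α i := by
  have key : ∀ n, (star (α j) ⬝ᵥ nv n) * (star (nv n) ⬝ᵥ α i)
      = ∑ k, ∑ l, ((starRingEnd ℂ) (α j k) * α i l) * (nv n k * (starRingEnd ℂ) (nv n l)) := by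
    intro n
    simp only [dotProduct, Pi.star_apply, RCLike.star_def, Finset.sum_mul_sum]
    refine Finset.sum_congr rfl fun k _ => Finset.sum_congr rfl fun l _ => by ring
  simp only [key]
  rw [Finset.sum_comm]
  have step : ∀ k : Fin da,
      ∑ n, ∑ l, ((starRingEnd ℂ) (α j k) * α i l) * (nv n k * (starRingEnd ℂ) (nv n l))
      = ∑ l, ((starRingEnd ℂ) (α j k) * α i l) * ∑ n, nv n k * (starRingEnd ℂ) (nv n l) := by
    intro k
    rw [Finset.sum_comm]
    exact Finset.sum_congr rfl fun l _ => (Finset.mul_sum _ _ _).symm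
  simp only [step, completeAux nv hnv]
  simp [dotProduct]

/-- MFI ≤ lQFI inequality for pure states:
    (Σᵢ sᵢ⟨βᵢ|H_b|βᵢ⟩)² ≤ Σₙ (Σ_{i,j} √(sᵢsⱼ)⟨αⱼ|n⟩⟨n|αᵢ⟩⟨βⱼ|H_b|βᵢ⟩)² / p(n). -/
theorem stmt13 {da db L : ℕ}
    (s : Fin L → ℝ) (hs : ∀ i, 0 < s i) (hsum : ∑ i, s i = 1)
    (α : Fin L → Fin da → ℂ) (hα : OrthonormalFam α)
    (β : Fin L → Fin db → ℂ) (hβ : OrthonormalFam β)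
    (Hb : Matrix (Fin db) (Fin db) ℂ) (hHb : Hb.IsHermitian)
    (nv : Fin da → Fin da → ℂ) (hnv : OrthonormalFam nv)
    (hp : ∀ n, 0 < ∑ i, s i * Complex.normSq (star (α i) ⬝ᵥ nv n)) :
    (∑ i, s i * (star (β i) ⬝ᵥ Hb *ᵥ β i).re) ^ 2 ≤
      ∑ n, ((∑ i, ∑ j,
          (Real.sqrt (s i * s j) : ℂ) * ((star (α j) ⬝ᵥ nv n) * (star (nv n) ⬝ᵥ α i))
            * (star (β j) ⬝ᵥ Hb *ᵥ β i)).re) ^ 2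
        / (∑ i, s i * Complex.normSq (star (α i) ⬝ᵥ nv n)) := by
  set P : Fin da → ℝ := fun n => ∑ i, s i * Complex.normSq (star (α i) ⬝ᵥ nv n) with hPdef
  set A : Fin da → ℝ := fun n => (∑ i, ∑ j,
      (Real.sqrt (s i * s j) : ℂ) * ((star (α j) ⬝ᵥ nv n) * (star (nv n) ⬝ᵥ α i))
        * (star (β j) ⬝ᵥ Hb *ᵥ β i)).re with hAdef
  -- Σₙ P n = 1
  have hPsum : ∑ n, P n = 1 := by
    have h1 : ∀ i : Fin L, ∑ n, Complex.normSq (star (α i) ⬝ᵥ nv n) = 1 := by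
      intro i
      have h2 : ((∑ n, Complex.normSq (star (α i) ⬝ᵥ nv n) : ℝ) : ℂ) = 1 := by
        push_cast
        have h3 : ∀ n, ((Complex.normSq (star (α i) ⬝ᵥ nv n) : ℝ) : ℂ)
            = (star (α i) ⬝ᵥ nv n) * (star (nv n) ⬝ᵥ α i) := by
          intro n
          rw [← Complex.mul_conj]
          congr 1
          rw [show star (nv n) ⬝ᵥ α i = star (star (α i) ⬝ᵥ nv n) from star_dotProduct _ _]
          rfl
        rw [Finset.sum_congr rfl fun n _ => h3 n, resolveAux nv hnv α i i, hα i i]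
        simp
      exact_mod_cast h2
    rw [hPdef, Finset.sum_comm]
    simp only [← Finset.mul_sum]
    simp only [h1, mul_one]
    exact hsum
  -- Σₙ A n = LHS
  have hAsum : ∑ n, A n = ∑ i, s i * (star (β i) ⬝ᵥ Hb *ᵥ β i).re := by
    have h0 : ∑ n, A n = (∑ n, ∑ i, ∑ j,
        (Real.sqrt (s i * s j) : ℂ) * ((star (α j) ⬝ᵥ nv n) * (star (nv n) ⬝ᵥ α i))
          * (star (β j) ⬝ᵥ Hb *ᵥ β i)).re := by
      rw [hAdef, Complex.re_sum]
    rw [h0, Finset.sum_comm]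
    have h1 : ∀ i : Fin L, ∑ n, ∑ j,
        (Real.sqrt (s i * s j) : ℂ) * ((star (α j) ⬝ᵥ nv n) * (star (nv n) ⬝ᵥ α i))
          * (star (β j) ⬝ᵥ Hb *ᵥ β i)
        = (s i : ℂ) * (star (β i) ⬝ᵥ Hb *ᵥ β i) := by
      intro i
      rw [Finset.sum_comm]
      have h2 : ∀ j : Fin L, ∑ n,
          (Real.sqrt (s i * s j) : ℂ) * ((star (α j) ⬝ᵥ nv n) * (star (nv n) ⬝ᵥ α i))
            * (star (β j) ⬝ᵥ Hb *ᵥ β i)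
          = (Real.sqrt (s i * s j) : ℂ) * (star (β j) ⬝ᵥ Hb *ᵥ β i)
            * ∑ n, (star (α j) ⬝ᵥ nv n) * (star (nv n) ⬝ᵥ α i) := by
        intro j
        rw [Finset.mul_sum]
        exact Finset.sum_congr rfl fun n _ => by ring
      simp only [h2, resolveAux nv hnv α i]
      rw [Finset.sum_eq_single i]
      · rw [hα i i, if_pos rfl, mul_one, Real.sqrt_mul_self (hs i).le]
      · intro j _ hj
        rw [hα j i, if_neg hj, mul_zero]
      · intro h; exact absurd (Finset.mem_univ i) h
    rw [Finset.sum_congr rfl fun i _ => h1 i, Complex.re_sum]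
    exact Finset.sum_congr rfl fun i _ => Complex.re_ofReal_mul _ _
  -- Cauchy–Schwarz (Sedrakyan)
  calc (∑ i, s i * (star (β i) ⬝ᵥ Hb *ᵥ β i).re) ^ 2
      = (∑ n, A n) ^ 2 / ∑ n, P n := by rw [hAsum, hPsum, div_one]
    _ ≤ ∑ n, (A n) ^ 2 / P n :=
        Finset.sq_sum_div_le_sum_sq_div _ A fun n _ => hp n
end

section
/- For any pure bipartite state ρ^{ab} = |ψ⟩⟨ψ| with Schmidt decomposition |ψ⟩ = Σᵢ √sᵢ |αᵢ⟩⊗|βᵢ⟩ and any orthonormal basis {|φₙ⟩} of H^a, the sum of local quantum Fisher informations over the projectors satisfies Σₙ F(ρ^{ab}, |φₙ⟩⟨φₙ|⊗1) = 1 − Σₙ (Σᵢ sᵢ|⟨αᵢ|φₙ⟩|²)² ≥ 1 − Σᵢ sᵢ². -/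
/-!
Each `P n` is a projector, so its variance in the pure state `ψ` is `q n - q n ^ 2` with
`q n = ⟨ψ|P n|ψ⟩ = ∑ i, s i * w i n`, where `w i n = |⟨α i|φ n⟩|²`: contracting `ψ` with `φ n` on
the first factor leaves `∑ i, √(s i) ⟨φ n|α i⟩ β i`, whose squared norm is computed by the
orthonormality of the `β i`. Parseval in the basis `φ` gives `∑ n, w i n = 1`, hence `∑ n, q n = 1`,
and Bessel for the family `α` gives `∑ i, w i n ≤ 1`. For such a doubly substochastic `w`,
Cauchy–Schwarz gives `(∑ i, s i * w i n) ^ 2 ≤ ∑ i, s i ^ 2 * w i n`, and summing over `n` yields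
`∑ n, q n ^ 2 ≤ ∑ i, s i ^ 2`.
-/

open Matrix BigOperators Kronecker

section Orthonormal

variable {ι κ d : Type*} [DecidableEq ι] [DecidableEq κ] [Fintype d]

theorem OrthonormalFam.orthonormal {v : ι → d → ℂ} (hv : OrthonormalFam v) :
    Orthonormal ℂ (fun i => WithLp.toLp 2 (v i)) := by
  rw [orthonormal_iff_ite]
  intro i j
  rw [EuclideanSpace.inner_toLp_toLp, dotProduct_comm, hv i j]

theorem OrthonormalFam.dotProduct_self {v : ι → d → ℂ} (hv : OrthonormalFam v) (i : ι) :
    star (v i) ⬝ᵥ v i = 1 := by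
  simpa using hv i i

theorem OrthonormalFam.sum_normSq_dotProduct_le [Fintype ι] {v : ι → d → ℂ}
    {w : κ → d → ℂ} (hv : OrthonormalFam v) (hw : OrthonormalFam w) (n : κ) :
    ∑ i, Complex.normSq (star (v i) ⬝ᵥ w n) ≤ 1 := by
  simpa [Complex.normSq_eq_norm_sq, EuclideanSpace.inner_toLp_toLp, dotProduct_comm,
    hw.orthonormal.1 n] using
    hv.orthonormal.sum_inner_products_le (s := Finset.univ) (WithLp.toLp 2 (w n))

theorem OrthonormalFam.sum_normSq_dotProduct_eq_one [Fintype κ] {v : ι → d → ℂ}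
    {w : κ → d → ℂ} (hv : OrthonormalFam v) (hw : OrthonormalFam w)
    (hcard : Fintype.card κ = Fintype.card d) (i : ι) :
    ∑ n, Complex.normSq (star (v i) ⬝ᵥ w n) = 1 := by
  have hspan := hw.orthonormal.linearIndependent.span_eq_top_of_card_eq_finrank'
    (by rw [finrank_euclideanSpace, hcard])
  simpa [Complex.normSq_eq_norm_sq, EuclideanSpace.inner_toLp_toLp, dotProduct_comm,
    hv.orthonormal.1 i] using
    (OrthonormalBasis.mk hw.orthonormal hspan.ge).sum_sq_norm_inner_left (WithLp.toLp 2 (v i))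

theorem OrthonormalFam.dotProduct_sum_smul [Fintype ι] {v : ι → d → ℂ} (hv : OrthonormalFam v)
    (c : ι → ℂ) : star (∑ i, c i • v i) ⬝ᵥ ∑ i, c i • v i = ∑ i, (Complex.normSq (c i) : ℂ) := by
  have := hv.orthonormal.inner_sum c c Finset.univ
  simp only [← WithLp.toLp_smul, ← WithLp.toLp_sum, EuclideanSpace.inner_toLp_toLp] at this
  rw [dotProduct_comm, this]
  simp only [Complex.normSq_eq_conj_mul_self]

end Orthonormal

theorem ketbra_mul_self {d : Type*} [Fintype d] {v : d → ℂ} (hv : star v ⬝ᵥ v = 1) :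
    ketbra v * ketbra v = ketbra v := by
  rw [ketbra, vecMulVec_mul_vecMulVec, hv, one_smul]

theorem ketbra_kronecker_one_mul_self {d₁ d₂ : Type*} [Fintype d₁] [Fintype d₂] [DecidableEq d₂]
    {v : d₁ → ℂ} (hv : star v ⬝ᵥ v = 1) :
    (ketbra v ⊗ₖ (1 : Matrix d₂ d₂ ℂ)) * (ketbra v ⊗ₖ 1) = ketbra v ⊗ₖ 1 := by
  rw [← mul_kronecker_mul, ketbra_mul_self hv, one_mul]

theorem ketbra_kronecker_one_mulVec {d₁ d₂ : Type*} [Fintype d₁] [Fintype d₂] [DecidableEq d₂]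
    (v : d₁ → ℂ) (ψ : d₁ × d₂ → ℂ) :
    (ketbra v ⊗ₖ (1 : Matrix d₂ d₂ ℂ)) *ᵥ ψ = fun x => v x.1 * (star v ⬝ᵥ fun a => ψ (a, x.2)) := by
  ext ⟨a, b⟩
  simp only [ketbra, mulVec, dotProduct, kroneckerMap_apply, vecMulVec_apply, one_apply,
    Fintype.sum_prod_type, mul_ite, mul_one, mul_zero, ite_mul, zero_mul, Finset.sum_ite_eq,
    Finset.mem_univ, if_true, Finset.mul_sum, Pi.star_apply, mul_assoc]

theorem dotProduct_ketbra_kronecker_one_mulVec {d₁ d₂ : Type*} [Fintype d₁] [Fintype d₂]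
    [DecidableEq d₂] (v : d₁ → ℂ) (ψ : d₁ × d₂ → ℂ) :
    star ψ ⬝ᵥ (ketbra v ⊗ₖ (1 : Matrix d₂ d₂ ℂ)) *ᵥ ψ
      = star (fun b => star v ⬝ᵥ fun a => ψ (a, b)) ⬝ᵥ fun b => star v ⬝ᵥ fun a => ψ (a, b) := by
  rw [ketbra_kronecker_one_mulVec]
  simp only [dotProduct, Fintype.sum_prod_type, Pi.star_apply, star_sum, star_mul', star_star,
    Finset.sum_mul]
  rw [Finset.sum_comm]
  exact Finset.sum_congr rfl fun b _ => Finset.sum_congr rfl fun a _ => by ring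

theorem schmidt_dotProduct_ketbra_kronecker_one_mulVec {ι d₁ d₂ : Type*} [Fintype ι]
    [DecidableEq ι] [Fintype d₁] [Fintype d₂] [DecidableEq d₂] {s : ι → ℝ} (hs : ∀ i, 0 ≤ s i)
    (α : ι → d₁ → ℂ) {β : ι → d₂ → ℂ} (hβ : OrthonormalFam β) (v : d₁ → ℂ) :
    let ψ : d₁ × d₂ → ℂ := fun x => ∑ i, (Real.sqrt (s i) : ℂ) * α i x.1 * β i x.2
    star ψ ⬝ᵥ (ketbra v ⊗ₖ (1 : Matrix d₂ d₂ ℂ)) *ᵥ ψ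
      = ((∑ i, s i * Complex.normSq (star (α i) ⬝ᵥ v) : ℝ) : ℂ) := by
  intro ψ
  have hcontract : (fun b => star v ⬝ᵥ fun a => ψ (a, b))
      = ∑ i, ((Real.sqrt (s i) : ℂ) * (star v ⬝ᵥ α i)) • β i := by
    ext b
    simp only [ψ, dotProduct, Finset.mul_sum, Finset.sum_apply, Pi.smul_apply, smul_eq_mul]
    rw [Finset.sum_comm]
    refine Finset.sum_congr rfl fun i _ => ?_
    rw [Finset.sum_mul]
    exact Finset.sum_congr rfl fun a _ => by ring
  rw [dotProduct_ketbra_kronecker_one_mulVec, hcontract, hβ.dotProduct_sum_smul,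
    Complex.ofReal_sum]
  refine Finset.sum_congr rfl fun i _ => congrArg _ ?_
  rw [Complex.normSq_mul, Complex.normSq_ofReal, Real.mul_self_sqrt (hs i), star_dotProduct,
    Complex.star_def, Complex.normSq_conj]

theorem sum_sq_sum_mul_le_sum_sq {ι κ : Type*} [Fintype ι] [Fintype κ] (s : ι → ℝ)
    {w : ι → κ → ℝ} (hw : ∀ i n, 0 ≤ w i n) (hrow : ∀ i, ∑ n, w i n = 1)
    (hcol : ∀ n, ∑ i, w i n ≤ 1) :
    ∑ n, (∑ i, s i * w i n) ^ 2 ≤ ∑ i, s i ^ 2 := by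
  have hcs : ∀ n, (∑ i, s i * w i n) ^ 2 ≤ ∑ i, s i ^ 2 * w i n := fun n =>
    calc (∑ i, s i * w i n) ^ 2 ≤ (∑ i, w i n) * ∑ i, s i ^ 2 * w i n :=
          Finset.sum_sq_le_sum_mul_sum_of_sq_le_mul _ (fun i _ => hw i n)
            (fun i _ => mul_nonneg (sq_nonneg _) (hw i n)) (fun i _ => (by ring : _ = _).le)
      _ ≤ ∑ i, s i ^ 2 * w i n :=
          mul_le_of_le_one_left (Finset.sum_nonneg fun i _ => mul_nonneg (sq_nonneg _) (hw i n))
            (hcol n)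
  calc ∑ n, (∑ i, s i * w i n) ^ 2 ≤ ∑ n, ∑ i, s i ^ 2 * w i n := Finset.sum_le_sum fun n _ => hcs n
    _ = ∑ i, s i ^ 2 := by
      rw [Finset.sum_comm]
      simp only [← Finset.mul_sum, hrow, mul_one]

/-- For a pure bipartite state and any orthonormal basis {φₙ} of H^a,
    Σₙ F(ρ, |φₙ⟩⟨φₙ|⊗1) = 1 − Σₙ (Σᵢ sᵢ|⟨αᵢ|φₙ⟩|²)² ≥ 1 − Σᵢ sᵢ²
    (for pure states F is the variance). -/
theorem stmt15 {da db L : ℕ}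
    (s : Fin L → ℝ) (hs : ∀ i, 0 < s i) (hsum : ∑ i, s i = 1)
    (α : Fin L → Fin da → ℂ) (hα : OrthonormalFam α)
    (β : Fin L → Fin db → ℂ) (hβ : OrthonormalFam β)
    (φ : Fin da → Fin da → ℂ) (hφ : OrthonormalFam φ)
    (ψ : Fin da × Fin db → ℂ)
    (hψ : ψ = fun x => ∑ i, (Real.sqrt (s i) : ℂ) * α i x.1 * β i x.2)
    (P : Fin da → Matrix (Fin da × Fin db) (Fin da × Fin db) ℂ)
    (hP : P = fun n => ketbra (φ n) ⊗ₖ (1 : Matrix (Fin db) (Fin db) ℂ)) :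
    (∑ n, ((star ψ ⬝ᵥ (P n * P n) *ᵥ ψ).re - ((star ψ ⬝ᵥ P n *ᵥ ψ).re) ^ 2)
        = 1 - ∑ n, (∑ i, s i * Complex.normSq (star (α i) ⬝ᵥ φ n)) ^ 2) ∧
      1 - ∑ i, s i ^ 2 ≤
        ∑ n, ((star ψ ⬝ᵥ (P n * P n) *ᵥ ψ).re - ((star ψ ⬝ᵥ P n *ᵥ ψ).re) ^ 2) := by
  set q : Fin da → ℝ := fun n => ∑ i, s i * Complex.normSq (star (α i) ⬝ᵥ φ n)
  have hvariance : ∀ n, (star ψ ⬝ᵥ (P n * P n) *ᵥ ψ).re - ((star ψ ⬝ᵥ P n *ᵥ ψ).re) ^ 2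
      = q n - q n ^ 2 := by
    intro n
    have hq : star ψ ⬝ᵥ P n *ᵥ ψ = q n := by
      rw [hψ, hP]
      exact schmidt_dotProduct_ketbra_kronecker_one_mulVec (fun i => (hs i).le) α hβ (φ n)
    have hproj : P n * P n = P n := by
      rw [hP]
      exact ketbra_kronecker_one_mul_self (hφ.dotProduct_self n)
    rw [hproj, hq, Complex.ofReal_re]
  have hq_sum : ∑ n, q n = 1 := by
    simp only [q]
    rw [Finset.sum_comm, ← hsum]
    simp only [← Finset.mul_sum, hα.sum_normSq_dotProduct_eq_one hφ rfl, mul_one]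
  simp only [hvariance, Finset.sum_sub_distrib, hq_sum]
  refine ⟨rfl, sub_le_sub_left ?_ 1⟩
  exact sum_sq_sum_mul_le_sum_sq s (fun i n => Complex.normSq_nonneg _)
    (hα.sum_normSq_dotProduct_eq_one hφ rfl) (hα.sum_normSq_dotProduct_le hφ)
end

section
/- For a pure bipartite state |ψ⟩ = Σᵢ √sᵢ |αᵢ⟩⊗|βᵢ⟩, choosing the basis of H^a consisting of the Schmidt vectors {|αᵢ⟩} extended by a basis {|γⱼ⟩} of the kernel of the reduced state Tr_b|ψ⟩⟨ψ|, the sum of local quantum Fisher informations attains Σᵢ F(ρ^{ab}, |αᵢ⟩⟨αᵢ|⊗1) + Σⱼ F(ρ^{ab}, |γⱼ⟩⟨γⱼ|⊗1) = 1 − Σᵢ sᵢ². Hence the minimum over bases, Q_{a,H}(ρ^{ab}), equals the geometric discord 1 − Σᵢ sᵢ². -/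
open Matrix BigOperators Kronecker

namespace Stmt16Aux

theorem step1 {da db L : ℕ} (c : Fin L → ℂ) (α : Fin L → Fin da → ℂ) (β : Fin L → Fin db → ℂ)
    (w : Fin da → ℂ) :
    (ketbra w ⊗ₖ (1 : Matrix (Fin db) (Fin db) ℂ)) *ᵥ
      (fun x : Fin da × Fin db => ∑ i, c i * α i x.1 * β i x.2)
    = fun p => (∑ i, c i * (star w ⬝ᵥ α i) * β i p.2) * w p.1 := by
  funext p
  simp only [Matrix.mulVec, dotProduct, ketbra, Matrix.vecMulVec, Matrix.kroneckerMap,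
    Matrix.of_apply, Matrix.one_apply, Fintype.sum_prod_type, Pi.star_apply, RCLike.star_def]
  simp only [mul_ite, mul_one, mul_zero, ite_mul, zero_mul, Finset.sum_ite_eq,
    Finset.mem_univ, if_true]
  simp only [Finset.mul_sum, Finset.sum_mul]
  rw [Finset.sum_comm]
  exact Finset.sum_congr rfl fun i _ => Finset.sum_congr rfl fun k _ => by ring

theorem step2a {da db L : ℕ} (c : Fin L → ℂ) (α : Fin L → Fin da → ℂ) (β : Fin L → Fin db → ℂ)
    (w : Fin da → ℂ) (g : Fin db → ℂ) :
    star (fun x : Fin da × Fin db => ∑ i, c i * α i x.1 * β i x.2) ⬝ᵥ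
      (fun p : Fin da × Fin db => g p.2 * w p.1)
    = ∑ i, (starRingEnd ℂ) (c i) * (star (α i) ⬝ᵥ w) * (star (β i) ⬝ᵥ g) := by
  simp only [dotProduct, Fintype.sum_prod_type, Pi.star_apply, RCLike.star_def, map_sum,
    _root_.map_mul, Finset.sum_mul, Finset.mul_sum]
  rw [Finset.sum_comm]
  refine Eq.trans (Finset.sum_congr rfl fun y _ => Finset.sum_comm ..) ?_
  rw [Finset.sum_comm]
  refine Finset.sum_congr rfl fun i _ => ?_
  refine Finset.sum_congr rfl fun k _ => Finset.sum_congr rfl fun l _ => by ring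

theorem step2b {db L : ℕ} (d : Fin L → ℂ) (β : Fin L → Fin db → ℂ) (v : Fin db → ℂ) :
    star v ⬝ᵥ (fun l => ∑ j, d j * β j l) = ∑ j, d j * (star v ⬝ᵥ β j) := by
  simp only [dotProduct, Pi.star_apply, Finset.mul_sum]
  rw [Finset.sum_comm]
  exact Finset.sum_congr rfl fun j _ => Finset.sum_congr rfl fun l _ => by ring

lemma conj_dot {d : ℕ} (u v : Fin d → ℂ) :
    (starRingEnd ℂ) (star u ⬝ᵥ v) = star v ⬝ᵥ u := by
  simp only [dotProduct, map_sum, _root_.map_mul, Pi.star_apply, RCLike.star_def,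
    Complex.conj_conj]
  exact Finset.sum_congr rfl fun k _ => by ring

lemma normSq_dot_symm {d : ℕ} (u v : Fin d → ℂ) :
    Complex.normSq (star u ⬝ᵥ v) = Complex.normSq (star v ⬝ᵥ u) := by
  rw [← conj_dot, Complex.normSq_conj]

lemma ketbra_mul_ketbra {d : ℕ} (w : Fin d → ℂ) :
    ketbra w * ketbra w = (star w ⬝ᵥ w) • ketbra w := by
  ext i j
  simp only [ketbra, Matrix.mul_apply, Matrix.vecMulVec_apply, Matrix.smul_apply,
    dotProduct, Pi.star_apply, smul_eq_mul, Finset.sum_mul, Finset.mul_sum]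
  exact Finset.sum_congr rfl fun k _ => by ring

/-- Parseval for a square orthonormal family. -/
lemma parseval {d : ℕ} (e : Fin d → Fin d → ℂ) (he : OrthonormalFam e) (x : Fin d → ℂ) :
    ∑ m, Complex.normSq (star (e m) ⬝ᵥ x) = (star x ⬝ᵥ x).re := by
  classical
  set U : Matrix (Fin d) (Fin d) ℂ := Matrix.of (fun m k => star (e m k)) with hU
  have hUU : U * Uᴴ = 1 := by
    ext m m'
    have := he m m'
    simpa [hU, Matrix.mul_apply, Matrix.conjTranspose_apply, dotProduct,
      Matrix.one_apply, mul_comm] using this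
  have hU1 : Uᴴ * U = 1 := mul_eq_one_comm.mp hUU
  have h1 : ∀ m, star (e m) ⬝ᵥ x = (U *ᵥ x) m := by
    intro m; simp [hU, Matrix.mulVec, dotProduct]
  have h2 : ∑ m, Complex.normSq ((U *ᵥ x) m) = (star (U *ᵥ x) ⬝ᵥ (U *ᵥ x)).re := by
    simp only [dotProduct, Pi.star_apply, Complex.re_sum]
    refine Finset.sum_congr rfl fun m _ => ?_
    rw [RCLike.star_def, mul_comm, Complex.mul_conj, Complex.ofReal_re]
  have h3 : star (U *ᵥ x) ⬝ᵥ (U *ᵥ x) = star x ⬝ᵥ x := by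
    rw [Matrix.star_mulVec, Matrix.dotProduct_mulVec, Matrix.vecMul_vecMul]
    rw [show star x ᵥ* (Uᴴ * U) = star x ᵥ* (1 : Matrix (Fin d) (Fin d) ℂ) from by rw [hU1]]
    simp
  simp only [h1, h2, h3]

/-- The key quadratic form computation. -/
theorem keyform {da db L : ℕ} (s : Fin L → ℝ) (hs : ∀ i, 0 ≤ s i)
    (α : Fin L → Fin da → ℂ) (β : Fin L → Fin db → ℂ) (hβ : OrthonormalFam β)
    (w : Fin da → ℂ) :
    star (fun x : Fin da × Fin db => ∑ i, (Real.sqrt (s i) : ℂ) * α i x.1 * β i x.2) ⬝ᵥ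
      (ketbra w ⊗ₖ (1 : Matrix (Fin db) (Fin db) ℂ)) *ᵥ
      (fun x : Fin da × Fin db => ∑ i, (Real.sqrt (s i) : ℂ) * α i x.1 * β i x.2)
    = ((∑ i, s i * Complex.normSq (star w ⬝ᵥ α i) : ℝ) : ℂ) := by
  rw [step1, step2a (g := fun l => ∑ j, ((Real.sqrt (s j) : ℂ) * (star w ⬝ᵥ α j)) * β j l)]
  have : ∀ i : Fin L, star (β i) ⬝ᵥ (fun l => ∑ j, ((Real.sqrt (s j) : ℂ) * (star w ⬝ᵥ α j)) * β j l)
      = (Real.sqrt (s i) : ℂ) * (star w ⬝ᵥ α i) := by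
    intro i
    rw [step2b]
    rw [Finset.sum_eq_single i]
    · rw [hβ i i]; simp
    · intro j _ hji; rw [hβ i j]; simp [Ne.symm hji]
    · intro h; exact absurd (Finset.mem_univ i) h
  push_cast
  refine Eq.trans (Finset.sum_congr rfl fun i _ => ?_) rfl
  rw [this i, ← conj_dot w (α i), Complex.conj_ofReal, ← Complex.mul_conj,
    show ((s i : ℝ) : ℂ) = (Real.sqrt (s i) : ℂ) * (Real.sqrt (s i) : ℂ) from by
      rw [← Complex.ofReal_mul, Real.mul_self_sqrt (hs i)]]
  ring

end Stmt16Aux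

open Stmt16Aux in
/-- For a pure state, the basis consisting of the Schmidt vectors {αᵢ} extended by a basis
    {γⱼ} of the kernel of the reduced state attains Σ F = 1 − Σᵢ sᵢ², and this value is the
    minimum Q_{a,H} over all orthonormal bases of H^a (the geometric discord). -/
theorem stmt16 {da db L K : ℕ} (hdim : da = L + K)
    (s : Fin L → ℝ) (hs : ∀ i, 0 < s i) (hsum : ∑ i, s i = 1)
    (α : Fin L → Fin da → ℂ) (β : Fin L → Fin db → ℂ) (hβ : OrthonormalFam β)
    (γ : Fin K → Fin da → ℂ)
    (hfam : OrthonormalFam (Sum.elim α γ))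
    (ψ : Fin da × Fin db → ℂ)
    (hψ : ψ = fun x => ∑ i, (Real.sqrt (s i) : ℂ) * α i x.1 * β i x.2)
    (hker : ∀ j, (Matrix.of fun k k' : Fin da => ∑ l, ketbra ψ (k, l) (k', l)) *ᵥ γ j = 0)
    (Var : (Fin da → ℂ) → ℝ)
    (hVar : Var = fun w =>
      (star ψ ⬝ᵥ ((ketbra w ⊗ₖ (1 : Matrix (Fin db) (Fin db) ℂ))
          * (ketbra w ⊗ₖ (1 : Matrix (Fin db) (Fin db) ℂ))) *ᵥ ψ).re
        - ((star ψ ⬝ᵥ (ketbra w ⊗ₖ (1 : Matrix (Fin db) (Fin db) ℂ)) *ᵥ ψ).re) ^ 2) :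
    ((∑ i, Var (α i)) + (∑ j, Var (γ j)) = 1 - ∑ i, s i ^ 2) ∧
      IsLeast {x : ℝ | ∃ φ : Fin da → Fin da → ℂ, OrthonormalFam φ ∧ x = ∑ n, Var (φ n)}
        (1 - ∑ i, s i ^ 2) := by
  -- inner products from the orthonormal family
  have hαα : ∀ i i', star (α i) ⬝ᵥ α i' = if i = i' then (1:ℂ) else 0 := by
    intro i i'; simpa using hfam (Sum.inl i) (Sum.inl i')
  have hγα : ∀ j i, star (γ j) ⬝ᵥ α i = 0 := by
    intro j i; simpa using hfam (Sum.inr j) (Sum.inl i)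
  have hα1 : ∀ n, star (α n) ⬝ᵥ α n = 1 := fun n => by rw [hαα n n]; simp
  have hγ1 : ∀ j, star (γ j) ⬝ᵥ γ j = 1 := fun j => by
    simpa using hfam (Sum.inr j) (Sum.inr j)
  -- the Var formula for normalized vectors
  have hVarw : ∀ w : Fin da → ℂ, star w ⬝ᵥ w = 1 →
      Var w = (∑ i, s i * Complex.normSq (star w ⬝ᵥ α i))
        - (∑ i, s i * Complex.normSq (star w ⬝ᵥ α i)) ^ 2 := by
    intro w hw
    have hP2 : (ketbra w ⊗ₖ (1 : Matrix (Fin db) (Fin db) ℂ))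
        * (ketbra w ⊗ₖ (1 : Matrix (Fin db) (Fin db) ℂ))
        = ketbra w ⊗ₖ (1 : Matrix (Fin db) (Fin db) ℂ) := by
      rw [← Matrix.mul_kronecker_mul, ketbra_mul_ketbra, hw, one_smul, Matrix.one_mul]
    rw [hVar]
    simp only [hψ, hP2, keyform s (fun i => (hs i).le) α β hβ w, Complex.ofReal_re]
  -- values on the Schmidt basis and the kernel basis
  have hVarα : ∀ n, Var (α n) = s n - s n ^ 2 := by
    intro n
    rw [hVarw (α n) (hα1 n)]
    have : (∑ i, s i * Complex.normSq (star (α n) ⬝ᵥ α i)) = s n := by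
      rw [Finset.sum_eq_single n]
      · rw [hαα n n]; simp
      · intro i _ hin; rw [hαα n i]; simp [Ne.symm hin]
      · intro h; exact absurd (Finset.mem_univ n) h
    rw [this]
  have hVarγ : ∀ j, Var (γ j) = 0 := by
    intro j
    rw [hVarw (γ j) (hγ1 j)]
    have : (∑ i, s i * Complex.normSq (star (γ j) ⬝ᵥ α i)) = 0 :=
      Finset.sum_eq_zero fun i _ => by rw [hγα j i]; simp
    rw [this]; ring
  -- first conjunct
  have hpart1 : (∑ i, Var (α i)) + (∑ j, Var (γ j)) = 1 - ∑ i, s i ^ 2 := by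
    rw [Finset.sum_congr rfl fun i _ => hVarα i, Finset.sum_eq_zero fun j _ => hVarγ j,
      add_zero, Finset.sum_sub_distrib, hsum]
  refine ⟨hpart1, ?_, ?_⟩
  · -- membership: the extended Schmidt basis attains the value
    refine ⟨fun k => Sum.elim α γ (finSumFinEquiv.symm (finCongr hdim k)), ?_, ?_⟩
    · intro i j
      rw [hfam]
      have : (finSumFinEquiv.symm (finCongr hdim i) = finSumFinEquiv.symm (finCongr hdim j))
          ↔ i = j := by simp [Fin.ext_iff]
      rw [if_congr this rfl rfl]
    · rw [show (∑ k : Fin da, Var (Sum.elim α γ (finSumFinEquiv.symm (finCongr hdim k))))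
          = ∑ m : Fin L ⊕ Fin K, Var (Sum.elim α γ m) from
          Fintype.sum_equiv ((finCongr hdim).trans finSumFinEquiv.symm) _ _ (fun k => rfl),
        Fintype.sum_sum_type]
      simp only [Sum.elim_inl, Sum.elim_inr]
      exact hpart1.symm
  · -- lower bound
    rintro x ⟨φ, hφ, rfl⟩
    have hφ1 : ∀ n, star (φ n) ⬝ᵥ φ n = 1 := fun n => by rw [hφ n n]; simp
    -- Parseval for the basis φ
    have hParse1 : ∀ i, ∑ n, Complex.normSq (star (φ n) ⬝ᵥ α i) = 1 := by
      intro i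
      rw [parseval φ hφ (α i), hα1 i]; simp
    -- Bessel bound from the full family α ⊕ γ
    have hbessel : ∀ n, ∑ i, Complex.normSq (star (φ n) ⬝ᵥ α i) ≤ 1 := by
      intro n
      have hF : OrthonormalFam
          (fun k : Fin da => Sum.elim α γ (finSumFinEquiv.symm (finCongr hdim k))) := by
        intro i j
        rw [hfam]
        have : (finSumFinEquiv.symm (finCongr hdim i) = finSumFinEquiv.symm (finCongr hdim j))
            ↔ i = j := by simp [Fin.ext_iff]
        rw [if_congr this rfl rfl]
      have hp := parseval _ hF (φ n)
      rw [hφ1 n] at hp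
      have hsplit : ∑ k : Fin da,
          Complex.normSq (star (Sum.elim α γ (finSumFinEquiv.symm (finCongr hdim k))) ⬝ᵥ φ n)
          = (∑ i, Complex.normSq (star (α i) ⬝ᵥ φ n))
            + ∑ j, Complex.normSq (star (γ j) ⬝ᵥ φ n) := by
        rw [show (∑ k : Fin da,
            Complex.normSq (star (Sum.elim α γ (finSumFinEquiv.symm (finCongr hdim k))) ⬝ᵥ φ n))
            = ∑ m : Fin L ⊕ Fin K, Complex.normSq (star (Sum.elim α γ m) ⬝ᵥ φ n) from
            Fintype.sum_equiv ((finCongr hdim).trans finSumFinEquiv.symm) _ _ (fun k => rfl),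
          Fintype.sum_sum_type]
        simp only [Sum.elim_inl, Sum.elim_inr]
      rw [hsplit] at hp
      have hnn : 0 ≤ ∑ j, Complex.normSq (star (γ j) ⬝ᵥ φ n) :=
        Finset.sum_nonneg fun j _ => Complex.normSq_nonneg _
      have : ∑ i, Complex.normSq (star (φ n) ⬝ᵥ α i)
          = ∑ i, Complex.normSq (star (α i) ⬝ᵥ φ n) :=
        Finset.sum_congr rfl fun i _ => normSq_dot_symm _ _
      rw [this]
      simp at hp
      linarith
    -- Cauchy-Schwarz
    have hCS : ∀ n, (∑ i, s i * Complex.normSq (star (φ n) ⬝ᵥ α i)) ^ 2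
        ≤ ∑ i, s i ^ 2 * Complex.normSq (star (φ n) ⬝ᵥ α i) := by
      intro n
      set t : Fin L → ℝ := fun i => Complex.normSq (star (φ n) ⬝ᵥ α i) with ht
      have htnn : ∀ i, 0 ≤ t i := fun i => Complex.normSq_nonneg _
      have CS := Finset.sum_mul_sq_le_sq_mul_sq Finset.univ
        (fun i => Real.sqrt (t i)) (fun i => s i * Real.sqrt (t i))
      have h1 : ∀ i : Fin L, Real.sqrt (t i) * (s i * Real.sqrt (t i)) = s i * t i := fun i => by
        rw [show Real.sqrt (t i) * (s i * Real.sqrt (t i))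
          = s i * (Real.sqrt (t i) * Real.sqrt (t i)) from by ring, Real.mul_self_sqrt (htnn i)]
      have h2 : ∀ i : Fin L, Real.sqrt (t i) ^ 2 = t i := fun i => Real.sq_sqrt (htnn i)
      have h3 : ∀ i : Fin L, (s i * Real.sqrt (t i)) ^ 2 = s i ^ 2 * t i := fun i => by
        rw [mul_pow, h2]
      rw [Finset.sum_congr rfl fun i _ => h1 i, Finset.sum_congr rfl fun i _ => h2 i,
        Finset.sum_congr rfl fun i _ => h3 i] at CS
      have hnn2 : 0 ≤ ∑ i, s i ^ 2 * t i :=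
        Finset.sum_nonneg fun i _ => mul_nonneg (sq_nonneg _) (htnn i)
      calc (∑ i, s i * t i) ^ 2 ≤ (∑ i, t i) * ∑ i, s i ^ 2 * t i := CS
        _ ≤ 1 * ∑ i, s i ^ 2 * t i := mul_le_mul_of_nonneg_right (hbessel n) hnn2
        _ = ∑ i, s i ^ 2 * t i := one_mul _
    -- assemble the lower bound
    have hsumM : ∑ n, (∑ i, s i * Complex.normSq (star (φ n) ⬝ᵥ α i)) = 1 := by
      rw [Finset.sum_comm]
      rw [Finset.sum_congr rfl fun i _ => by
        rw [← Finset.mul_sum, hParse1 i, mul_one]]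
      exact hsum
    have hsumM2 : ∑ n, (∑ i, s i * Complex.normSq (star (φ n) ⬝ᵥ α i)) ^ 2
        ≤ ∑ i, s i ^ 2 := by
      calc ∑ n, (∑ i, s i * Complex.normSq (star (φ n) ⬝ᵥ α i)) ^ 2
          ≤ ∑ n, ∑ i, s i ^ 2 * Complex.normSq (star (φ n) ⬝ᵥ α i) :=
            Finset.sum_le_sum fun n _ => hCS n
        _ = ∑ i, s i ^ 2 := by
            rw [Finset.sum_comm]
            exact Finset.sum_congr rfl fun i _ => by
              rw [← Finset.mul_sum, hParse1 i, mul_one]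
    have hval : ∑ n, Var (φ n)
        = 1 - ∑ n, (∑ i, s i * Complex.normSq (star (φ n) ⬝ᵥ α i)) ^ 2 := by
      rw [Finset.sum_congr rfl fun n _ => hVarw (φ n) (hφ1 n), Finset.sum_sub_distrib, hsumM]
    rw [hval]
    linarith
end
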